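/- Port-Hamiltonian implies KYP: if the LTV system is port-Hamiltonian with data Q, J, R, K, G, P, S, N, then Q satisfies the Kalman–Yakubovich–Popov inequality, i.e. the Hermitian block matrix [[−A(t)*Q(t) − Q(t)A(t) − Q̇(t), C(t)* − Q(t)B(t)],[C(t) − B(t)*Q(t), D(t) + D(t)*]] is positive semidefinite for a.e. t ∈ 𝕋. -/

import Mathlib

open MeasureTheory Matrix Set
open scoped ENNReal ComplexOrder

noncomputable section

attribute [local instance] Matrix.normedAddCommGroup Matrix.normedSpace

variable {n m : ℕ}

/-- `f` is locally `Lᵖ` on the interval `T`: it is `ℒᵖ` on every compact subinterval. -/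
def LocLp {E : Type*} [NormedAddCommGroup E] (T : Set ℝ) (p : ℝ≥0∞) (f : ℝ → E) : Prop :=
  ∀ a ∈ T, ∀ b ∈ T, MemLp f p (volume.restrict (Icc a b))

/-- The coefficient regularity assumptions of an LTV system:
`A ∈ L¹_loc`, `B ∈ L²_loc`, `C ∈ L²_loc`, `D ∈ L^∞_loc`. -/
def IsLTV (T : Set ℝ) (A : ℝ → Matrix (Fin n) (Fin n) ℂ) (B : ℝ → Matrix (Fin n) (Fin m) ℂ)
    (C : ℝ → Matrix (Fin m) (Fin n) ℂ) (D : ℝ → Matrix (Fin m) (Fin m) ℂ) : Prop :=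
  LocLp T 1 A ∧ LocLp T 2 B ∧ LocLp T 2 C ∧ LocLp T ⊤ D

/-- Port-Hamiltonian structure for the LTV system `(A,B,C,D)` with Hamiltonian data
`Q` (which is `W^{1,1}_loc` with a.e. derivative `Q'`) and coefficients
`J, R, K, G, P, S, N`. -/
def IsPH (T : Set ℝ) (A : ℝ → Matrix (Fin n) (Fin n) ℂ) (B : ℝ → Matrix (Fin n) (Fin m) ℂ)
    (C : ℝ → Matrix (Fin m) (Fin n) ℂ) (D : ℝ → Matrix (Fin m) (Fin m) ℂ)
    (Q Q' J R K : ℝ → Matrix (Fin n) (Fin n) ℂ)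
    (G P : ℝ → Matrix (Fin n) (Fin m) ℂ) (S N : ℝ → Matrix (Fin m) (Fin m) ℂ) : Prop :=
  (∀ t ∈ T, (Q t).PosSemidef) ∧
  LocLp T 1 Q' ∧
  (∀ s ∈ T, ∀ t ∈ T, Q t - Q s = ∫ r in s..t, Q' r) ∧
  AEStronglyMeasurable J (volume.restrict T) ∧
  AEStronglyMeasurable R (volume.restrict T) ∧
  AEStronglyMeasurable K (volume.restrict T) ∧
  AEStronglyMeasurable G (volume.restrict T) ∧
  AEStronglyMeasurable P (volume.restrict T) ∧
  AEStronglyMeasurable S (volume.restrict T) ∧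
  AEStronglyMeasurable N (volume.restrict T) ∧
  (∀ᵐ t ∂(volume : Measure ℝ), t ∈ T →
    J t = -(J t)ᴴ ∧ N t = -(N t)ᴴ ∧
    Q t * K t + (K t)ᴴ * Q t = Q' t ∧
    (Matrix.fromBlocks (R t) (P t) ((P t)ᴴ) (S t)).PosSemidef ∧
    A t = (J t - R t) * Q t - K t ∧
    B t = G t - P t ∧
    C t = (G t + P t)ᴴ * Q t ∧
    D t = S t - N t)

/-! Substituting the port-Hamiltonian representation, the skew parts `J` and `N` cancel and
`Q̇ = QK + KᴴQ` absorbs `K`, so the KYP matrix becomes `2 Mᴴ W M` with `M = diag(Q, I)`: a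
congruence transform of the positive semidefinite dissipation matrix `W = [[R, P], [Pᴴ, S]]`. -/

section KYP

variable {ι κ 𝕜 : Type*} [Fintype ι] [CommRing 𝕜] [StarRing 𝕜]

def kypMatrix (Q Q' A : Matrix ι ι 𝕜) (B : Matrix ι κ 𝕜) (C : Matrix κ ι 𝕜) (D : Matrix κ κ 𝕜) :
    Matrix (ι ⊕ κ) (ι ⊕ κ) 𝕜 :=
  fromBlocks (-(Aᴴ * Q) - Q * A - Q') (Cᴴ - Q * B) (C - Bᴴ * Q) (D + Dᴴ)

theorem conjTranspose_fromBlocks_one_mul_fromBlocks_mul [Fintype κ] [DecidableEq κ]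
    (Q R : Matrix ι ι 𝕜) (P : Matrix ι κ 𝕜) (S : Matrix κ κ 𝕜) :
    (fromBlocks Q 0 0 1)ᴴ * fromBlocks R P Pᴴ S * fromBlocks Q 0 0 1 =
      fromBlocks (Qᴴ * R * Q) (Qᴴ * P) (Pᴴ * Q) S := by
  simp [fromBlocks_conjTranspose, fromBlocks_multiply]

theorem kypMatrix_pH_eq {Q J R K : Matrix ι ι 𝕜} {G P : Matrix ι κ 𝕜} {S N : Matrix κ κ 𝕜}
    (hQ : Qᴴ = Q) (hJ : Jᴴ = -J) (hR : Rᴴ = R) (hS : Sᴴ = S) (hN : Nᴴ = -N) :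
    kypMatrix Q (Q * K + Kᴴ * Q) ((J - R) * Q - K) (G - P) ((G + P)ᴴ * Q) (S - N) =
      fromBlocks (Q * R * Q) (Q * P) (Pᴴ * Q) S + fromBlocks (Q * R * Q) (Q * P) (Pᴴ * Q) S := by
  rw [fromBlocks_add, kypMatrix]
  congr 1
  · simp only [conjTranspose_sub, conjTranspose_mul, hQ, hJ, hR]
    noncomm_ring
  · simp only [conjTranspose_mul, conjTranspose_add, conjTranspose_conjTranspose, hQ]
    rw [Matrix.mul_add, Matrix.mul_sub]
    abel
  · simp only [conjTranspose_sub, conjTranspose_add]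
    rw [Matrix.add_mul, Matrix.sub_mul]
    abel
  · simp only [conjTranspose_sub, hS, hN]
    noncomm_ring

theorem posSemidef_kypMatrix_pH [Fintype κ] [DecidableEq κ] [PartialOrder 𝕜] [AddLeftMono 𝕜]
    {Q J R K : Matrix ι ι 𝕜} {G P : Matrix ι κ 𝕜} {S N : Matrix κ κ 𝕜}
    (hQ : Qᴴ = Q) (hJ : Jᴴ = -J) (hN : Nᴴ = -N) (hW : (fromBlocks R P Pᴴ S).PosSemidef) :
    (kypMatrix Q (Q * K + Kᴴ * Q) ((J - R) * Q - K) (G - P) ((G + P)ᴴ * Q) (S - N)).PosSemidef := by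
  obtain ⟨hR, -, -, hS⟩ := isHermitian_fromBlocks_iff.mp hW.isHermitian
  have hWQ := hW.conjTranspose_mul_mul_same (fromBlocks Q 0 0 (1 : Matrix κ κ 𝕜))
  rw [conjTranspose_fromBlocks_one_mul_fromBlocks_mul, hQ] at hWQ
  rw [kypMatrix_pH_eq hQ hJ hR.eq hS.eq hN]
  exact hWQ.add hWQ

end KYP

theorem pH_implies_KYP_general
    (T : Set ℝ)
    (A : ℝ → Matrix (Fin n) (Fin n) ℂ) (B : ℝ → Matrix (Fin n) (Fin m) ℂ)
    (C : ℝ → Matrix (Fin m) (Fin n) ℂ) (D : ℝ → Matrix (Fin m) (Fin m) ℂ)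
    (Q Q' J R K : ℝ → Matrix (Fin n) (Fin n) ℂ)
    (G P : ℝ → Matrix (Fin n) (Fin m) ℂ) (S N : ℝ → Matrix (Fin m) (Fin m) ℂ)
    (hPH : IsPH T A B C D Q Q' J R K G P S N) :
    ∀ᵐ t ∂(volume : Measure ℝ), t ∈ T →
      (Matrix.fromBlocks
        (-((A t)ᴴ * Q t) - Q t * A t - Q' t) ((C t)ᴴ - Q t * B t)
        (C t - (B t)ᴴ * Q t) (D t + (D t)ᴴ)).PosSemidef := by
  obtain ⟨hQ, -, -, -, -, -, -, -, -, -, hpH⟩ := hPH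
  filter_upwards [hpH] with t hpHt htT
  obtain ⟨hJ, hN, hQ', hW, hA, hB, hC, hD⟩ := hpHt htT
  rw [hA, hB, hC, hD, ← hQ']
  exact posSemidef_kypMatrix_pH (hQ t htT).isHermitian.eq (neg_eq_iff_eq_neg.mpr hJ).symm
    (neg_eq_iff_eq_neg.mpr hN).symm hW

/-- **Port-Hamiltonian implies KYP.** If the LTV system is port-Hamiltonian with data
`Q, J, R, K, G, P, S, N`, then `Q` satisfies the Kalman–Yakubovich–Popov inequality:
`[[−AᴴQ − QA − Q̇, Cᴴ − QB],[C − BᴴQ, D + Dᴴ]] ⪰ 0` a.e. on `𝕋`. -/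
theorem pH_implies_KYP
    (T : Set ℝ) (hTopen : IsOpen T) (hTconn : T.OrdConnected)
    (A : ℝ → Matrix (Fin n) (Fin n) ℂ) (B : ℝ → Matrix (Fin n) (Fin m) ℂ)
    (C : ℝ → Matrix (Fin m) (Fin n) ℂ) (D : ℝ → Matrix (Fin m) (Fin m) ℂ)
    (hLTV : IsLTV T A B C D)
    (Q Q' J R K : ℝ → Matrix (Fin n) (Fin n) ℂ)
    (G P : ℝ → Matrix (Fin n) (Fin m) ℂ) (S N : ℝ → Matrix (Fin m) (Fin m) ℂ)
    (hPH : IsPH T A B C D Q Q' J R K G P S N) :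
    ∀ᵐ t ∂(volume : Measure ℝ), t ∈ T →
      (Matrix.fromBlocks
        (-((A t)ᴴ * Q t) - Q t * A t - Q' t) ((C t)ᴴ - Q t * B t)
        (C t - (B t)ᴴ * Q t) (D t + (D t)ᴴ)).PosSemidef :=
  pH_implies_KYP_general T A B C D Q Q' J R K G P S N hPH
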